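/- Let z = x + iy be a complex number with y ≠ 0, let r₁ = |z−1|, r₂ = |z+1|, α = (r₁+r₂)/2, β = (r₂−r₁)/2, and let Y(z) = α·√(1−β²) − i·sign(y)·β·√(α²−1). Let X₁(z) = √((r₁+(x−1))/2) + i·sign(y)·√((r₁−(x−1))/2) and X₂(z) = √((r₂+(x+1))/2) + i·sign(y)·√((r₂−(x+1))/2). Then Y(z) = −i·sign(y)·X₁(z)·X₂(z). -/

import Mathlib

open Complex

/-- `α(w) = (|w-1| + |w+1|)/2`. -/
noncomputable def alpha (w : ℂ) : ℝ := (‖w - 1‖ + ‖w + 1‖) / 2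

/-- `β(w) = (|w+1| - |w-1|)/2`. -/
noncomputable def beta (w : ℂ) : ℝ := (‖w + 1‖ - ‖w - 1‖) / 2

/-- Principal branch `Y(w)` of `√(1-w²)`. -/
noncomputable def Y (w : ℂ) : ℂ :=
  (alpha w * Real.sqrt (1 - (beta w) ^ 2) : ℝ) -
    Complex.I * (Real.sign w.im : ℝ) * (beta w * Real.sqrt ((alpha w) ^ 2 - 1) : ℝ)

/-- Principal branch `X₁(w)` of `√(w-1)`. -/
noncomputable def X₁ (w : ℂ) : ℂ :=
  (Real.sqrt ((‖w - 1‖ + (w.re - 1)) / 2) : ℝ) +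
    Complex.I * (Real.sign w.im : ℝ) *
      (Real.sqrt ((‖w - 1‖ - (w.re - 1)) / 2) : ℝ)

/-- Principal branch `X₂(w)` of `√(w+1)`. -/
noncomputable def X₂ (w : ℂ) : ℂ :=
  (Real.sqrt ((‖w + 1‖ + (w.re + 1)) / 2) : ℝ) +
    Complex.I * (Real.sign w.im : ℝ) *
      (Real.sqrt ((‖w + 1‖ - (w.re + 1)) / 2) : ℝ)

/-! With `a = α`, `b = β` one has `|z - 1| = a - b`, `|z + 1| = a + b` and `x = a b`, so the
four radicands in `X₁` and `X₂` factor as `(a ∓ 1)(1 ± b)/2`. Writing `p = √((a-1)/2)`,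
`q = √((a+1)/2)`, `u = √(1+b)`, `v = √(1-b)` and `s = sign y`, this gives `X₁ = p u + i s q v` and
`X₂ = q u + i s p v`; since `p² + q² = a`, `u² - v² = 2b`, `2pq = √(a²-1)`, `uv = √(1-b²)` and
`s² = 1`, the product `X₁ X₂` is `b √(a²-1) + i s a √(1-b²) = i s Y`. -/

lemma norm_sub_one_eq_alpha_sub_beta (z : ℂ) : ‖z - 1‖ = alpha z - beta z := by
  unfold alpha beta; ring

lemma norm_add_one_eq_alpha_add_beta (z : ℂ) : ‖z + 1‖ = alpha z + beta z := by
  unfold alpha beta; ring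

lemma re_eq_alpha_mul_beta (z : ℂ) : z.re = alpha z * beta z := by
  have h₁ : ‖z - 1‖ ^ 2 = (z.re - 1) ^ 2 + z.im ^ 2 := by
    rw [Complex.sq_norm, Complex.normSq_apply]
    simp only [sub_re, one_re, sub_im, one_im, sub_zero]; ring
  have h₂ : ‖z + 1‖ ^ 2 = (z.re + 1) ^ 2 + z.im ^ 2 := by
    rw [Complex.sq_norm, Complex.normSq_apply]
    simp only [add_re, one_re, add_im, one_im, add_zero]; ring
  unfold alpha beta
  linear_combination (h₁ - h₂) / 4

lemma one_le_alpha (z : ℂ) : 1 ≤ alpha z := by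
  have h := norm_sub_le (z + 1) (z - 1)
  rw [show z + 1 - (z - 1) = 2 by ring, Complex.norm_two] at h
  unfold alpha; linarith

lemma abs_beta_le_one (z : ℂ) : |beta z| ≤ 1 := by
  have h := abs_norm_sub_norm_le (z + 1) (z - 1)
  rw [show z + 1 - (z - 1) = 2 by ring, Complex.norm_two] at h
  unfold beta; rw [abs_div, abs_two]; linarith

lemma sign_sq_of_ne_zero {r : ℝ} (hr : r ≠ 0) : Real.sign r ^ 2 = 1 := by
  rcases Real.sign_apply_eq_of_ne_zero r hr with h | h <;> simp [h]

lemma elliptic_Y_eq_neg_I_mul_X₁_mul_X₂ {a b s : ℝ} (ha : 1 ≤ a) (hb : |b| ≤ 1)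
    (hs : s ^ 2 = 1) :
    ((a * √(1 - b ^ 2) : ℝ) : ℂ) - I * (s : ℂ) * ((b * √(a ^ 2 - 1) : ℝ) : ℂ) =
      -I * (s : ℂ) *
        ((((√((a - 1) * (1 + b) / 2) : ℝ) : ℂ) +
            I * (s : ℂ) * ((√((a + 1) * (1 - b) / 2) : ℝ) : ℂ)) *
          (((√((a + 1) * (1 + b) / 2) : ℝ) : ℂ) +
            I * (s : ℂ) * ((√((a - 1) * (1 - b) / 2) : ℝ) : ℂ))) := by
  obtain ⟨hb₁, hb₂⟩ := abs_le.mp hb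
  set p := √((a - 1) / 2)
  set q := √((a + 1) / 2)
  set u := √(1 + b)
  set v := √(1 - b)
  have hp : p ^ 2 = (a - 1) / 2 := Real.sq_sqrt (by linarith)
  have hq : q ^ 2 = (a + 1) / 2 := Real.sq_sqrt (by linarith)
  have hu : u ^ 2 = 1 + b := Real.sq_sqrt (by linarith)
  have hv : v ^ 2 = 1 - b := Real.sq_sqrt (by linarith)
  have sqrt_split (c d : ℝ) (hc : 0 ≤ c) : √(c * d / 2) = √(c / 2) * √d := by
    rw [mul_div_right_comm, Real.sqrt_mul (by positivity)]
  have hpu : √((a - 1) * (1 + b) / 2) = p * u := sqrt_split _ _ (by linarith)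
  have hqv : √((a + 1) * (1 - b) / 2) = q * v := sqrt_split _ _ (by linarith)
  have hqu : √((a + 1) * (1 + b) / 2) = q * u := sqrt_split _ _ (by linarith)
  have hpv : √((a - 1) * (1 - b) / 2) = p * v := sqrt_split _ _ (by linarith)
  have hpq : √(a ^ 2 - 1) = 2 * p * q := by
    rw [show a ^ 2 - 1 = (2 * p * q) ^ 2 by
        linear_combination (-4 * q ^ 2) * hp - 2 * (a - 1) * hq, Real.sqrt_sq (by positivity)]
  have huv : √(1 - b ^ 2) = u * v := by
    rw [show 1 - b ^ 2 = (u * v) ^ 2 by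
        linear_combination (-v ^ 2) * hu - (1 + b) * hv, Real.sqrt_sq (by positivity)]
  rw [hpu, hqv, hqu, hpv, hpq, huv]
  have hpC : (p : ℂ) ^ 2 = (a - 1) / 2 := by exact_mod_cast hp
  have hqC : (q : ℂ) ^ 2 = (a + 1) / 2 := by exact_mod_cast hq
  have huC : (u : ℂ) ^ 2 = 1 + b := by exact_mod_cast hu
  have hvC : (v : ℂ) ^ 2 = 1 - b := by exact_mod_cast hv
  have hsC : (s : ℂ) ^ 2 = 1 := by exact_mod_cast hs
  push_cast
  linear_combination (-(u : ℂ) * v) * (hpC + hqC) + (I * s * p * q) * (huC - hvC)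
    - (u * v * (p ^ 2 + q ^ 2) + I * s * p * q * v ^ 2) * hsC
    + (s ^ 2 * u * v * (p ^ 2 + q ^ 2) + I * s ^ 3 * p * q * v ^ 2) * I_sq

theorem stmt5 (z : ℂ) (h : z.im ≠ 0) :
    Y z = -Complex.I * (Real.sign z.im : ℝ) * (X₁ z * X₂ z) := by
  rw [Y, X₁, X₂, norm_sub_one_eq_alpha_sub_beta, norm_add_one_eq_alpha_add_beta,
    re_eq_alpha_mul_beta]
  convert elliptic_Y_eq_neg_I_mul_X₁_mul_X₂ (one_le_alpha z) (abs_beta_le_one z)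
    (sign_sq_of_ne_zero h) using 7 <;> ring
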